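/- Let n and r be integers with 1 ≤ r ≤ n − 2, and let G be a finite simple graph of order n with vertex connectivity exactly r. Then H(G) ≤ ((n−1)² + r)/2, with equality if and only if G is isomorphic to K(n−1,r). -/

import Mathlib

open SimpleGraph

/-- The Harary index of a finite simple graph: sum of reciprocals of distances over
unordered pairs of distinct vertices (pairs at infinite distance contribute `0`,
since `SimpleGraph.dist` is `0` there and `1/0 = 0` in `ℝ`). -/
noncomputable def hararyIndex {V : Type*} [Fintype V] (G : SimpleGraph V) : ℝ :=
  (∑ u : V, ∑ v : V, (1 : ℝ) / (G.dist u v)) / 2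

/-- The graph `K(n-1, r)` on `n` vertices: a complete graph `K_{n-1}` on the first
`n - 1` vertices, together with one extra vertex (the last one) joined to exactly the
first `r` vertices of the `K_{n-1}`. -/
def Knr (n r : ℕ) : SimpleGraph (Fin n) :=
  SimpleGraph.fromRel (fun a b =>
    ((a : ℕ) < n - 1 ∧ (b : ℕ) < n - 1) ∨ ((a : ℕ) = n - 1 ∧ (b : ℕ) < r))

/-- The vertex connectivity of `G`: the least number of vertices whose deletion yields
a disconnected graph or a single vertex. -/
noncomputable def vertexConnectivity {V : Type*} [Fintype V] (G : SimpleGraph V) : ℕ :=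
  sInf {k | ∃ S : Set V, S.ncard = k ∧
    (¬ (G.induce (Sᶜ : Set V)).Connected ∨ (Sᶜ : Set V).ncard = 1)}

open Finset

/-!
Bounding `1 / d(u, v)` by `1` on edges and by `1 / 2` on non-adjacent pairs gives
`2 H(G) ≤ n (n - 1) - |E(Gᶜ)|`. Removing a minimum vertex cut (of size `r`) leaves two nonempty
parts `A`, `B` with no edges between them, so `Gᶜ` contains the complete bipartite graph on
`A, B` and `|E(Gᶜ)| ≥ |A| |B| ≥ |A| + |B| - 1 = n - r - 1`, which is the bound. In the case of
equality `|A| |B| = |A| + |B| - 1`, so one part is a single vertex `v` and `Gᶜ` is exactly the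
star from `v` to the other part: `G ≅ K(n - 1, r)`. Conversely, in `K(n - 1, r)` any two
non-adjacent vertices have a common neighbour, so every estimate above is an equality.
-/

lemma Nat.eq_one_or_eq_one_of_mul_le_add_sub_one {a b : ℕ} (ha : a ≠ 0) (hb : b ≠ 0)
    (h : a * b ≤ a + b - 1) : a = 1 ∨ b = 1 := by
  by_contra! hne
  have : a * b + 1 ≤ a + b := by omega
  have : 2 ≤ a := by omega
  have : 2 ≤ b := by omega
  nlinarith

namespace SimpleGraph

variable {V W : Type*}

def completeBipartiteOn (A B : Finset V) : SimpleGraph V :=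
  fromRel fun x y => x ∈ A ∧ y ∈ B

instance [DecidableEq V] (A B : Finset V) : DecidableRel (completeBipartiteOn A B).Adj :=
  inferInstanceAs (DecidableRel (fromRel _).Adj)

lemma completeBipartiteOn_adj {A B : Finset V} {x y : V} :
    (completeBipartiteOn A B).Adj x y ↔ x ≠ y ∧ (x ∈ A ∧ y ∈ B ∨ y ∈ A ∧ x ∈ B) :=
  fromRel_adj _ x y

lemma completeBipartiteOn_comm (A B : Finset V) :
    completeBipartiteOn A B = completeBipartiteOn B A := by
  ext x y
  simp only [completeBipartiteOn_adj]
  tauto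

lemma completeBipartiteOn_le_compl {G : SimpleGraph V} {A B : Finset V}
    (h : ∀ a ∈ A, ∀ b ∈ B, ¬ G.Adj a b) : completeBipartiteOn A B ≤ Gᶜ := by
  intro x y hxy
  rw [completeBipartiteOn_adj] at hxy
  refine (compl_adj G x y).2 ⟨hxy.1, ?_⟩
  rcases hxy.2 with ⟨hx, hy⟩ | ⟨hy, hx⟩
  · exact h x hx y hy
  · exact fun hadj => h y hy x hx hadj.symm

lemma card_edgeFinset_completeBipartiteOn [Fintype V] [DecidableEq V] {A B : Finset V}
    (h : Disjoint A B) : #(completeBipartiteOn A B).edgeFinset = #A * #B := by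
  have hbip : (completeBipartiteOn A B).IsBipartiteWith A B :=
    ⟨disjoint_coe.2 h, fun x y hxy => by
      rw [completeBipartiteOn_adj] at hxy
      simpa [or_comm, and_comm] using hxy.2⟩
  rw [← isBipartiteWith_sum_degrees_eq_card_edges hbip, ← smul_eq_mul, ← sum_const]
  refine sum_congr rfl fun a ha => ?_
  rw [← card_neighborFinset_eq_degree]
  congr 1
  ext b
  simp only [mem_neighborFinset, completeBipartiteOn_adj]
  have := Finset.disjoint_left.1 h
  grind

lemma nonempty_iso_compl_completeBipartiteOn_singleton [Fintype V] [Fintype W]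
    [DecidableEq V] [DecidableEq W] {v : V} {w : W} {B : Finset V} {T : Finset W}
    (hv : v ∉ B) (hw : w ∉ T) (hcard : Fintype.card V = Fintype.card W) (hBT : #B = #T) :
    Nonempty ((completeBipartiteOn {v} B)ᶜ ≃g (completeBipartiteOn {w} T)ᶜ) := by
  -- match `B` with `T` and the rest with the rest, composed with a swap so that `v ↦ w`
  let e₁ : {x // x ∈ B} ≃ {y // y ∈ T} := Fintype.equivOfCardEq (by simpa using hBT)
  let e₀ : {x // x ∉ B} ≃ {y // y ∉ T} := Fintype.equivOfCardEq (by
    rw [Fintype.card_subtype_compl, Fintype.card_subtype_compl, hcard]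
    simpa using congrArg (Fintype.card W - ·) hBT)
  let e₂ := e₀.trans (Equiv.swap (e₀ ⟨v, hv⟩) ⟨w, hw⟩)
  let e : V ≃ W :=
    (Equiv.sumCompl (· ∈ B)).symm.trans ((e₁.sumCongr e₂).trans (Equiv.sumCompl (· ∈ T)))
  have hev : ∀ x, e x = w ↔ x = v := fun x => by
    rw [← e.apply_eq_iff_eq (y := v)]
    simp [e, e₂, hv]
  have heB : ∀ x, e x ∈ T ↔ x ∈ B := by
    intro x
    by_cases hx : x ∈ B
    · simp [e, hx]
    · simp only [e, Equiv.trans_apply, Equiv.sumCompl_symm_apply_of_neg hx,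
        Equiv.sumCongr_apply, Sum.map_inr, Equiv.sumCompl_apply_inr, hx, iff_false]
      exact (e₂ ⟨x, hx⟩).2
  refine ⟨⟨e, fun {a b} => ?_⟩⟩
  simp only [compl_adj, completeBipartiteOn_adj, mem_singleton, ne_eq, e.apply_eq_iff_eq, hev,
    heB]

lemma Hom.edist_le {G : SimpleGraph V} {G' : SimpleGraph W} (f : G →g G') (u v : V) :
    G'.edist (f u) (f v) ≤ G.edist u v := by
  cases h : G.edist u v with
  | top => exact le_top
  | coe k =>
    obtain ⟨p, hp⟩ := exists_walk_of_edist_eq_coe h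
    simpa [hp] using (p.map f).edist_le

lemma Iso.edist_eq {G : SimpleGraph V} {G' : SimpleGraph W} (e : G ≃g G') (u v : V) :
    G'.edist (e u) (e v) = G.edist u v :=
  le_antisymm (Hom.edist_le e.toHom u v) (by simpa using Hom.edist_le e.symm.toHom (e u) (e v))

lemma Iso.dist_eq {G : SimpleGraph V} {G' : SimpleGraph W} (e : G ≃g G') (u v : V) :
    G'.dist (e u) (e v) = G.dist u v := by
  rw [dist, dist, e.edist_eq]

theorem hararyIndex_congr [Fintype V] [Fintype W] {G : SimpleGraph V} {G' : SimpleGraph W}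
    (e : G ≃g G') : hararyIndex G = hararyIndex G' := by
  rw [hararyIndex, hararyIndex, ← e.toEquiv.sum_comp]
  congr 1
  refine sum_congr rfl fun u _ => ?_
  rw [← e.toEquiv.sum_comp]
  simp only [RelIso.coe_fn_toEquiv, e.dist_eq]

variable (G : SimpleGraph V)

lemma one_div_dist_le_half_of_not_adj {u w : V} (h : ¬ G.Adj u w) :
    (1 : ℝ) / G.dist u w ≤ 1 / 2 := by
  rcases Nat.lt_or_ge (G.dist u w) 2 with hlt | hge
  · -- `dist` is `0` between vertices in different components
    have : G.dist u w = 0 := by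
      have := mt dist_eq_one_iff_adj.1 h
      omega
    simp [this]
  · gcongr
    exact_mod_cast hge

lemma one_div_dist_le [DecidableEq V] [DecidableRel G.Adj] (u w : V) :
    (1 : ℝ) / G.dist u w ≤
      1 - (if u = w then 1 else 0) - (if Gᶜ.Adj u w then 1 else 0) / 2 := by
  by_cases huw : u = w
  · simp [huw]
  by_cases hadj : G.Adj u w
  · simp [huw, hadj, dist_eq_one_iff_adj.2 hadj]
  · have := one_div_dist_le_half_of_not_adj G hadj
    simp only [huw, hadj, compl_adj, ne_eq, not_false_eq_true, and_self, if_true, if_false]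
    linarith

lemma one_div_dist_eq_of_dist_eq_two [DecidableEq V] [DecidableRel G.Adj] {u w : V}
    (h : Gᶜ.Adj u w → G.dist u w = 2) :
    (1 : ℝ) / G.dist u w =
      1 - (if u = w then 1 else 0) - (if Gᶜ.Adj u w then 1 else 0) / 2 := by
  by_cases huw : u = w
  · simp [huw]
  by_cases hadj : G.Adj u w
  · simp [huw, hadj, dist_eq_one_iff_adj.2 hadj]
  · have hc : Gᶜ.Adj u w := (compl_adj G u w).2 ⟨huw, hadj⟩
    simp only [huw, hc, h hc, if_true, if_false]
    norm_num

lemma sum_sum_one_sub_ite_compl_adj [Fintype V] [DecidableEq V] [DecidableRel G.Adj] :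
    ∑ u : V, ∑ w : V,
        (1 - (if u = w then 1 else 0) - (if Gᶜ.Adj u w then 1 else 0) / 2 : ℝ) =
      Fintype.card V * Fintype.card V - Fintype.card V - #Gᶜ.edgeFinset := by
  have hdeg : ∀ u, ∑ w : V, (if Gᶜ.Adj u w then 1 else 0 : ℝ) = Gᶜ.degree u := fun u => by
    rw [sum_boole, ← neighborFinset_eq_filter, card_neighborFinset_eq_degree]
  simp only [sum_sub_distrib, ← sum_div, hdeg, sum_ite_eq, mem_univ, if_true, sum_const,
    card_univ, nsmul_eq_mul, mul_one]
  rw [← Nat.cast_sum, sum_degrees_eq_twice_card_edges]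
  push_cast
  ring

theorem two_mul_hararyIndex_le [Fintype V] [DecidableEq V] [DecidableRel G.Adj] :
    2 * hararyIndex G ≤ Fintype.card V * Fintype.card V - Fintype.card V - #Gᶜ.edgeFinset := by
  rw [hararyIndex, mul_div_cancel₀ _ two_ne_zero, ← sum_sum_one_sub_ite_compl_adj]
  exact sum_le_sum fun u _ => sum_le_sum fun w _ => one_div_dist_le G u w

theorem two_mul_hararyIndex_eq_of_forall_compl_adj [Fintype V] [DecidableEq V]
    [DecidableRel G.Adj] (h : ∀ u w, Gᶜ.Adj u w → G.dist u w = 2) :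
    2 * hararyIndex G = Fintype.card V * Fintype.card V - Fintype.card V - #Gᶜ.edgeFinset := by
  rw [hararyIndex, mul_div_cancel₀ _ two_ne_zero, ← sum_sum_one_sub_ite_compl_adj]
  exact sum_congr rfl fun u _ => sum_congr rfl fun w _ => one_div_dist_eq_of_dist_eq_two G (h u w)

lemma dist_compl_completeBipartiteOn_singleton [DecidableEq V] {v s b : V} {B : Finset V}
    (hv : v ∉ B) (hsv : s ≠ v) (hsB : s ∉ B) (hb : b ∈ B) :
    (completeBipartiteOn {v} B)ᶜ.dist v b = 2 := by
  have hbv : b ≠ v := fun h => hv (h ▸ hb)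
  have hbs : b ≠ s := fun h => hsB (h ▸ hb)
  have hedist : (completeBipartiteOn {v} B)ᶜ.edist v b = 2 := by
    rw [edist_eq_two_iff]
    refine ⟨hbv.symm, ?_, s, ?_⟩
    · simp [completeBipartiteOn_adj, hbv.symm, hb]
    · simp [mem_commonNeighbors, completeBipartiteOn_adj, hsv, hsv.symm, hsB, hv, hbv, hbs]
  simp [dist, hedist]

theorem two_mul_hararyIndex_compl_completeBipartiteOn_singleton [Fintype V] [DecidableEq V]
    {v s : V} {B : Finset V} (hv : v ∉ B) (hsv : s ≠ v) (hsB : s ∉ B) :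
    2 * hararyIndex (completeBipartiteOn {v} B)ᶜ =
      Fintype.card V * Fintype.card V - Fintype.card V - #B := by
  have hE : #(completeBipartiteOn {v} B)ᶜᶜ.edgeFinset =
      #(completeBipartiteOn {v} B).edgeFinset := by
    congr 1; ext; simp
  rw [two_mul_hararyIndex_eq_of_forall_compl_adj, hE,
    card_edgeFinset_completeBipartiteOn (disjoint_singleton_left.2 hv), card_singleton, one_mul]
  intro u w huw
  rw [compl_compl, completeBipartiteOn_adj, mem_singleton, mem_singleton] at huw
  rcases huw.2 with ⟨rfl, hw⟩ | ⟨rfl, hu⟩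
  · exact dist_compl_completeBipartiteOn_singleton hv hsv hsB hw
  · rw [dist_comm]
    exact dist_compl_completeBipartiteOn_singleton hv hsv hsB hu

lemma exists_completeBipartiteOn_le_compl_of_not_connected_induce [Fintype V] {s : Set V}
    (hs : s.Nonempty) (h : ¬ (G.induce s).Connected) :
    ∃ A B : Finset V, Disjoint A B ∧ A.Nonempty ∧ B.Nonempty ∧ #A + #B = s.ncard ∧
      completeBipartiteOn A B ≤ Gᶜ := by
  classical
  have : Nonempty s := hs.to_subtype
  obtain ⟨x, y, hxy⟩ : ∃ x y : s, ¬ (G.induce s).Reachable x y := by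
    simpa [connected_iff, Preconnected, this] using h
  set A := univ.filter fun z => ∃ hz : z ∈ s, (G.induce s).Reachable x ⟨z, hz⟩
  set B := univ.filter fun z => ∃ hz : z ∈ s, ¬ (G.induce s).Reachable x ⟨z, hz⟩
  have hAB : Disjoint A B := by
    rw [Finset.disjoint_left]
    rintro z hzA hzB
    obtain ⟨-, _, hr⟩ := mem_filter.1 hzA
    obtain ⟨-, _, hnr⟩ := mem_filter.1 hzB
    exact hnr hr
  refine ⟨A, B, hAB, ⟨x, by simp [A]⟩, ⟨y, by simpa [B] using hxy⟩, ?_, ?_⟩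
  · rw [← card_union_of_disjoint hAB, Set.ncard_eq_toFinset_card']
    congr 1
    ext z
    simp only [A, B, mem_union, mem_filter, mem_univ, true_and, Set.mem_toFinset]
    tauto
  · refine completeBipartiteOn_le_compl fun a ha b hb hadj => ?_
    obtain ⟨-, ha, hra⟩ := mem_filter.1 ha
    obtain ⟨-, hb, hnrb⟩ := mem_filter.1 hb
    exact hnrb (hra.trans (Adj.reachable (G := G.induce s) hadj))

section VertexConnectivity

variable {G} [Fintype V] {r : ℕ}

lemma exists_not_connected_induce_compl_of_vertexConnectivity_eq
    (hconn : vertexConnectivity G = r) (hrn : r + 2 ≤ Fintype.card V) :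
    ∃ S : Set V, Sᶜ.ncard + r = Fintype.card V ∧ ¬ (G.induce Sᶜ).Connected := by
  have hne : {k | ∃ S : Set V, S.ncard = k ∧
      (¬ (G.induce (Sᶜ : Set V)).Connected ∨ (Sᶜ : Set V).ncard = 1)}.Nonempty :=
    ⟨_, Set.univ, rfl, Or.inl fun hc => by simpa using hc.nonempty⟩
  have hmem := Nat.sInf_mem hne
  rw [← vertexConnectivity, hconn] at hmem
  obtain ⟨S, hS, hdisc⟩ := hmem
  have hSc : Sᶜ.ncard + r = Fintype.card V := by
    rw [← hS, add_comm, Set.ncard_add_ncard_compl, Nat.card_eq_fintype_card]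
  exact ⟨S, hSc, hdisc.resolve_right (by omega)⟩

lemma exists_completeBipartiteOn_le_compl_of_vertexConnectivity_eq
    (hconn : vertexConnectivity G = r) (hrn : r + 2 ≤ Fintype.card V) :
    ∃ A B : Finset V, Disjoint A B ∧ A.Nonempty ∧ B.Nonempty ∧
      #A + #B + r = Fintype.card V ∧ completeBipartiteOn A B ≤ Gᶜ := by
  obtain ⟨S, hSc, hdisc⟩ := exists_not_connected_induce_compl_of_vertexConnectivity_eq hconn hrn
  rw [← hSc]
  simpa using G.exists_completeBipartiteOn_le_compl_of_not_connected_induce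
    (Set.nonempty_of_ncard_ne_zero (by omega)) hdisc

variable [DecidableEq V] [DecidableRel G.Adj]

lemma card_le_card_edgeFinset_compl_add_of_vertexConnectivity_eq
    (hconn : vertexConnectivity G = r) (hrn : r + 2 ≤ Fintype.card V) :
    Fintype.card V ≤ #Gᶜ.edgeFinset + r + 1 := by
  obtain ⟨A, B, hAB, hA, hB, hcard, hle⟩ :=
    exists_completeBipartiteOn_le_compl_of_vertexConnectivity_eq hconn hrn
  have hmul : #A * #B ≤ #Gᶜ.edgeFinset := by
    rw [← card_edgeFinset_completeBipartiteOn hAB]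
    exact card_le_card (edgeFinset_mono hle)
  have := Nat.add_sub_one_le_mul hA.card_pos.ne' hB.card_pos.ne'
  omega

lemma exists_eq_compl_completeBipartiteOn_singleton_of_card_edgeFinset_compl_add_le
    (hconn : vertexConnectivity G = r) (hrn : r + 2 ≤ Fintype.card V)
    (hE : #Gᶜ.edgeFinset + r + 1 ≤ Fintype.card V) :
    ∃ v B, v ∉ B ∧ #B + r + 1 = Fintype.card V ∧ G = (completeBipartiteOn {v} B)ᶜ := by
  obtain ⟨A, B, hAB, hA, hB, hcard, hle⟩ :=
    exists_completeBipartiteOn_le_compl_of_vertexConnectivity_eq hconn hrn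
  have hsub := edgeFinset_mono hle
  have hmul : #A * #B ≤ #A + #B - 1 := by
    rw [← card_edgeFinset_completeBipartiteOn hAB]
    have := card_le_card hsub
    omega
  have hG : G = (completeBipartiteOn A B)ᶜ := by
    have := Nat.add_sub_one_le_mul hA.card_pos.ne' hB.card_pos.ne'
    rw [← compl_compl G, compl_inj_iff, eq_comm, ← edgeFinset_inj]
    exact eq_of_subset_of_card_le hsub (by rw [card_edgeFinset_completeBipartiteOn hAB]; omega)
  rcases Nat.eq_one_or_eq_one_of_mul_le_add_sub_one hA.card_pos.ne' hB.card_pos.ne' hmul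
    with hA1 | hB1
  · obtain ⟨v, rfl⟩ := card_eq_one.1 hA1
    exact ⟨v, B, disjoint_singleton_left.1 hAB, by omega, hG⟩
  · obtain ⟨v, rfl⟩ := card_eq_one.1 hB1
    refine ⟨v, A, disjoint_singleton_right.1 hAB, by omega, ?_⟩
    rwa [completeBipartiteOn_comm] at hG

end VertexConnectivity

end SimpleGraph

lemma Knr_succ_eq (m r : ℕ) (hr : r ≤ m) :
    Knr (m + 1) r = (completeBipartiteOn {Fin.last m} (Ico ⟨r, by omega⟩ (Fin.last m)))ᶜ := by
  ext x y
  simp only [Knr, fromRel_adj, compl_adj, completeBipartiteOn_adj, mem_singleton, mem_Ico,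
    Fin.ext_iff, Fin.le_def, Fin.lt_def, Fin.val_last, ne_eq, add_tsub_cancel_right]
  omega

theorem hararyIndex_Knr {n r : ℕ} (hr : 1 ≤ r) (hrn : r < n) :
    hararyIndex (Knr n r) = (((n : ℝ) - 1) ^ 2 + r) / 2 := by
  obtain ⟨m, rfl⟩ : ∃ m, n = m + 1 := ⟨n - 1, by omega⟩
  have h := two_mul_hararyIndex_compl_completeBipartiteOn_singleton (v := Fin.last m) (s := 0)
    (B := Ico ⟨r, by omega⟩ (Fin.last m)) (by simp) (by simp; omega) (by simp; omega)
  rw [Fintype.card_fin, Fin.card_Ico, Fin.val_last, Fin.val_mk, Nat.cast_sub (by omega)] at h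
  rw [Knr_succ_eq m r (by omega)]
  push_cast at h ⊢
  linarith

lemma nonempty_compl_completeBipartiteOn_singleton_iso_Knr {V : Type*} [Fintype V]
    [DecidableEq V] {v : V} {B : Finset V} {r : ℕ} (hv : v ∉ B)
    (hB : #B + r + 1 = Fintype.card V) :
    Nonempty ((completeBipartiteOn {v} B)ᶜ ≃g Knr (Fintype.card V) r) := by
  obtain ⟨m, hm⟩ : ∃ m, Fintype.card V = m + 1 := ⟨#B + r, hB.symm⟩
  rw [hm, Knr_succ_eq m r (by omega)]
  exact nonempty_iso_compl_completeBipartiteOn_singleton hv (by simp) (by simp [hm])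
    (by simp; omega)

/-- A graph of order `n` with vertex connectivity `r` (`1 ≤ r ≤ n − 2`) satisfies
`H(G) ≤ ((n−1)² + r)/2`, with equality iff `G ≅ K(n−1, r)`. -/
theorem harary_le_of_vertexConnectivity (n r : ℕ) (hr : 1 ≤ r) (hrn : r + 2 ≤ n)
    {V : Type*} [Fintype V] (G : SimpleGraph V) (hcard : Fintype.card V = n)
    (hconn : vertexConnectivity G = r) :
    hararyIndex G ≤ (((n : ℝ) - 1) ^ 2 + r) / 2 ∧
      (hararyIndex G = (((n : ℝ) - 1) ^ 2 + r) / 2 ↔ Nonempty (G ≃g Knr n r)) := by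
  classical
  subst hcard
  have hE : (Fintype.card V : ℝ) ≤ #Gᶜ.edgeFinset + r + 1 := by
    exact_mod_cast card_le_card_edgeFinset_compl_add_of_vertexConnectivity_eq hconn hrn
  have hle := two_mul_hararyIndex_le G
  refine ⟨by linarith, fun h => ?_, fun ⟨e⟩ => ?_⟩
  · have hE' : #Gᶜ.edgeFinset + r + 1 ≤ Fintype.card V := by
      exact_mod_cast (by linarith : (#Gᶜ.edgeFinset : ℝ) + r + 1 ≤ Fintype.card V)
    obtain ⟨v, B, hv, hB, rfl⟩ :=
      exists_eq_compl_completeBipartiteOn_singleton_of_card_edgeFinset_compl_add_le hconn hrn hE'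
    exact nonempty_compl_completeBipartiteOn_singleton_iso_Knr hv hB
  · rw [hararyIndex_congr e, hararyIndex_Knr hr (by omega)]
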